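/- For any two real m×n matrices X and Y (with n ≤ m), the Frobenius inner product satisfies ⟨X, Y⟩ ≤ ⟨σ(X), σ(Y)⟩, where σ(X) denotes the vector of singular values of X arranged in nonincreasing order. -/

import Mathlib

open Filter Topology Matrix

noncomputable section

abbrev Mat (m n : ℕ) := Matrix (Fin m) (Fin n) ℝ

namespace Paper

/-- Frobenius (trace) inner product on real matrices. -/
def finner {m n : ℕ} (X Y : Mat m n) : ℝ := ∑ i, ∑ j, X i j * Y i j

/-- Frobenius norm. -/
def fnorm {m n : ℕ} (X : Mat m n) : ℝ := Real.sqrt (finner X X)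

/-- Euclidean inner product on `ℝⁿ`. -/
def vinner {n : ℕ} (x y : Fin n → ℝ) : ℝ := ∑ i, x i * y i

/-- Euclidean norm on `ℝⁿ`. -/
def vnorm {n : ℕ} (x : Fin n → ℝ) : ℝ := Real.sqrt (vinner x x)

/-- Eigenvalues of a real symmetric matrix, arranged in nonincreasing order. -/
def eigs {k : ℕ} (A : Matrix (Fin k) (Fin k) ℝ) (hA : A.IsHermitian) : Fin k → ℝ :=
  fun i => hA.eigenvalues (Tuple.sort (fun j => -(hA.eigenvalues j)) i)

/-- Singular values of a real `m × n` matrix, arranged in nonincreasing order. -/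
def svals {m n : ℕ} (X : Mat m n) : Fin n → ℝ :=
  fun i => Real.sqrt (eigs _ (by rw [Matrix.IsHermitian, Matrix.conjTranspose_eq_transpose_of_trivial,
    Matrix.transpose_mul, Matrix.transpose_transpose] : (Xᵀ * X).IsHermitian) i)

/-- The `m × n` matrix with `x` on the diagonal and zeros elsewhere. -/
def mdiag {m n : ℕ} (x : Fin n → ℝ) : Mat m n :=
  fun i j => if (i : ℕ) = (j : ℕ) then x j else 0

/-- The symmetric block matrix `B(X) = [[0, X], [Xᵀ, 0]]`, reindexed over `Fin (m+n)`. -/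
def bmat {m n : ℕ} (X : Mat m n) : Matrix (Fin (m + n)) (Fin (m + n)) ℝ :=
  Matrix.reindex finSumFinEquiv finSumFinEquiv (Matrix.fromBlocks 0 X Xᵀ 0)

lemma bmat_isHermitian {m n : ℕ} (X : Mat m n) : (bmat X).IsHermitian := by
  rw [Matrix.IsHermitian]
  ext i j
  simp only [bmat, Matrix.conjTranspose_apply, Matrix.reindex_apply, Matrix.submatrix_apply,
    star_trivial]
  rcases hi : finSumFinEquiv.symm i with a | a <;> rcases hj : finSumFinEquiv.symm j with b | b <;>
    simp [Matrix.fromBlocks, Matrix.transpose_apply]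

/-- Eigenvalues of `B(X)` in nonincreasing order. -/
def beigs {m n : ℕ} (X : Mat m n) : Fin (m + n) → ℝ :=
  eigs (bmat X) (bmat_isHermitian X)

/-- `Q` is a signed permutation matrix. -/
def IsSignedPerm {n : ℕ} (Q : Matrix (Fin n) (Fin n) ℝ) : Prop :=
  ∃ (e : Equiv.Perm (Fin n)) (s : Fin n → ℝ), (∀ i, s i = 1 ∨ s i = -1) ∧
    ∀ i j, Q i j = if j = e i then s i else 0

/-- A set of vectors invariant under all signed permutations. -/
def AbsSymSet {n : ℕ} (K : Set (Fin n → ℝ)) : Prop :=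
  ∀ Q, IsSignedPerm Q → ∀ x ∈ K, Q.mulVec x ∈ K

/-- An extended-real-valued absolutely symmetric function. -/
def AbsSymFun {n : ℕ} (f : (Fin n → ℝ) → EReal) : Prop :=
  ∀ Q, IsSignedPerm Q → ∀ x, f (Q.mulVec x) = f x

/-- Euclidean distance from a point to a set in `ℝⁿ`. -/
def vdist {n : ℕ} (x : Fin n → ℝ) (K : Set (Fin n → ℝ)) : ℝ :=
  sInf ((fun y => vnorm (x - y)) '' K)

/-- Frobenius distance from a matrix to a set of matrices. -/
def mdist {m n : ℕ} (X : Mat m n) (Γ : Set (Mat m n)) : ℝ :=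
  sInf ((fun Y => fnorm (X - Y)) '' Γ)

section Variational

variable {E : Type*} [AddCommGroup E] [Module ℝ E] [TopologicalSpace E]

/-- The subderivative `dg(x)(w) = liminf_{t↓0, w'→w} (g(x+tw') - g(x))/t`. -/
def subderiv (g : E → EReal) (x w : E) : EReal :=
  liminf (fun p : ℝ × E => ((p.1⁻¹ : ℝ) : EReal) * (g (x + p.1 • p.2) - g x))
    ((𝓝[>] (0 : ℝ)) ×ˢ 𝓝 w)

/-- The second-order difference quotient `Δ²_τ g(x | v)(w)`. -/
def secondQuot (ip : E → E → ℝ) (g : E → EReal) (x v : E) (τ : ℝ) (w : E) : EReal :=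
  ((2 / τ ^ 2 : ℝ) : EReal) * (g (x + τ • w) - g x - ((τ * ip v w : ℝ) : EReal))

/-- The second subderivative `d²g(x | v)(w)`. -/
def secondSubderiv (ip : E → E → ℝ) (g : E → EReal) (x v w : E) : EReal :=
  liminf (fun p : ℝ × E => secondQuot ip g x v p.1 p.2) ((𝓝[>] (0 : ℝ)) ×ˢ 𝓝 w)

/-- The parabolic difference quotient `Δ²_τ g(x)(w | z)`. -/
def parabQuot (g : E → EReal) (x w : E) (τ : ℝ) (z : E) : EReal :=
  ((2 / τ ^ 2 : ℝ) : EReal) *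
    (g (x + τ • w + (τ ^ 2 / 2) • z) - g x - ((τ : ℝ) : EReal) * subderiv g x w)

/-- The parabolic subderivative `d²g(x)(w | z)`. -/
def parabolicSubderiv (g : E → EReal) (x w z : E) : EReal :=
  liminf (fun p : ℝ × E => parabQuot g x w p.1 p.2) ((𝓝[>] (0 : ℝ)) ×ˢ 𝓝 z)

/-- Parabolic epi-differentiability of `g` at `x` for `w`. -/
def ParabEpiDiffAt (g : E → EReal) (x w : E) : Prop :=
  (∃ z, parabolicSubderiv g x w z < ⊤) ∧
  ∀ z : E, ∀ t : ℕ → ℝ, (∀ k, 0 < t k) → Tendsto t atTop (𝓝 0) →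
    ∃ zk : ℕ → E, Tendsto zk atTop (𝓝 z) ∧
      Tendsto (fun k => parabQuot g x w (t k) (zk k)) atTop (𝓝 (parabolicSubderiv g x w z))

/-- The (contingent) tangent cone to `C` at `x`. -/
def tangentConeOf (C : Set E) (x : E) : Set E :=
  {w | ∃ t : ℕ → ℝ, ∃ w' : ℕ → E, (∀ k, 0 < t k) ∧ Tendsto t atTop (𝓝 0) ∧
    Tendsto w' atTop (𝓝 w) ∧ ∀ k, x + t k • w' k ∈ C}

/-- The second-order tangent set to `C` at `x` for `w`. -/
def tangentCone2Of (C : Set E) (x w : E) : Set E :=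
  {u | ∃ t : ℕ → ℝ, ∃ u' : ℕ → E, (∀ k, 0 < t k) ∧ Tendsto t atTop (𝓝 0) ∧
    Tendsto u' atTop (𝓝 u) ∧ ∀ k, x + t k • w + (t k ^ 2 / 2) • u' k ∈ C}

/-- Parabolic derivability of the set `C` at `x` for `w`. -/
def ParabolicallyDerivable (C : Set E) (x w : E) : Prop :=
  (tangentCone2Of C x w).Nonempty ∧
  ∀ u ∈ tangentCone2Of C x w, ∃ ε > (0 : ℝ), ∃ ξ : ℝ → E,
    (∀ t ∈ Set.Icc (0 : ℝ) ε, ξ t ∈ C) ∧ ξ 0 = x ∧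
    Tendsto (fun t : ℝ => t⁻¹ • (ξ t - x)) (𝓝[>] 0) (𝓝 w) ∧
    Tendsto (fun t : ℝ => (2 / t ^ 2) • (ξ t - x - t • w)) (𝓝[>] 0) (𝓝 u)

/-- The convex subdifferential of `g` at `x` (w.r.t. the pairing `ip`). -/
def convSubdiff (ip : E → E → ℝ) (g : E → EReal) (x : E) : Set E :=
  {v | ∀ y, ((ip v (y - x) : ℝ) : EReal) + g x ≤ g y}

/-- Convexity for extended-real-valued functions. -/
def ConvexEReal (g : E → EReal) : Prop :=
  ∀ x y : E, ∀ t : ℝ, 0 ≤ t → t ≤ 1 →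
    g (t • x + (1 - t) • y) ≤ ((t : ℝ) : EReal) * g x + ((1 - t : ℝ) : EReal) * g y

end Variational

/-- Local Lipschitz continuity of `f` relative to its domain (everywhere on the domain). -/
def LocLipRelDom {n : ℕ} (f : (Fin n → ℝ) → EReal) : Prop :=
  ∀ x, f x ≠ ⊤ → ∃ l ≥ (0 : ℝ), ∃ U ∈ 𝓝 x, ∀ y ∈ U, ∀ z ∈ U, f y ≠ ⊤ → f z ≠ ⊤ →
    |(f y).toReal - (f z).toReal| ≤ l * vnorm (y - z)

/-- The columns of `U` with indices `r, r+1, …, k-1`. -/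
def colsFrom {k : ℕ} (r : ℕ) (U : Matrix (Fin k) (Fin k) ℝ) :
    Matrix (Fin k) (Fin (k - r)) ℝ :=
  fun i j => U i ⟨r + (j : ℕ), by have := j.isLt; omega⟩

/-- The first `r` columns of `U`. -/
def firstCols {k : ℕ} (r : ℕ) (h : r ≤ k) (U : Matrix (Fin k) (Fin k) ℝ) :
    Matrix (Fin k) (Fin r) ℝ :=
  fun i j => U i (Fin.castLE h j)

/-- The submatrix of `M` with rows `a ≤ · < b` and columns `c ≤ · < d`. -/
def subBlock {p q : ℕ} (M : Matrix (Fin p) (Fin q) ℝ) (a b c d : ℕ)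
    (h1 : b ≤ p) (h2 : d ≤ q) : Matrix (Fin (b - a)) (Fin (d - c)) ℝ :=
  fun i j => M ⟨a + (i : ℕ), by have := i.isLt; omega⟩ ⟨c + (j : ℕ), by have := j.isLt; omega⟩

/-- Nuclear norm: the sum of all singular values. -/
def nucNorm {m n : ℕ} (A : Mat m n) : ℝ := ∑ j, svals A j

/-- `Ψₙ(X) = σ_{r+1}(X) + ⋯ + σ_n(X)`, the sum of the `n - r` smallest singular values. -/
def psiN {m n : ℕ} (r : ℕ) (X : Mat m n) : ℝ :=
  ∑ s : Fin n, if r ≤ (s : ℕ) then svals X s else 0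

/-- The regular (Fréchet) subdifferential of a real-valued function on matrices. -/
def regSubdiff {m n : ℕ} (g : Mat m n → ℝ) (X : Mat m n) : Set (Mat m n) :=
  {V | ∀ ε > (0 : ℝ), ∀ᶠ Y in 𝓝 X, g X + finner V (Y - X) - ε * fnorm (Y - X) ≤ g Y}

/-- Two square matrices admit a simultaneous ordered spectral decomposition. -/
def SimSpec {k : ℕ} (A B : Matrix (Fin k) (Fin k) ℝ) : Prop :=
  ∃ (W : Matrix (Fin k) (Fin k) ℝ) (a b : Fin k → ℝ), Wᵀ * W = 1 ∧
    Antitone a ∧ Antitone b ∧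
    A = W * Matrix.diagonal a * Wᵀ ∧ B = W * Matrix.diagonal b * Wᵀ

/-- Two rectangular matrices admit a simultaneous ordered singular value decomposition. -/
def SimSVD {p q : ℕ} (A B : Matrix (Fin p) (Fin q) ℝ) : Prop :=
  ∃ (U : Matrix (Fin p) (Fin p) ℝ) (V : Matrix (Fin q) (Fin q) ℝ)
    (a b : Fin q → ℝ), Uᵀ * U = 1 ∧ Vᵀ * V = 1 ∧
    Antitone a ∧ Antitone b ∧ (∀ j, 0 ≤ a j) ∧ (∀ j, 0 ≤ b j) ∧
    A = U * mdiag (m := p) a * Vᵀ ∧ B = U * mdiag (m := p) b * Vᵀ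

end Paper

open Paper

/-!
Write `X = U₁ diag σ(X) V₁ᵀ` and `Y = U₂ diag σ(Y) V₂ᵀ` with `V₁, V₂` orthogonal and `U₁, U₂` having
orthogonal columns of norm `0` or `1`. Then `⟨X, Y⟩ = ∑ᵢⱼ Pᵢⱼ Qᵢⱼ σᵢ(X) σⱼ(Y)` with `P = U₁ᵀU₂` and
`Q = V₁ᵀV₂`. By Bessel's inequality the rows and columns of `P` and `Q` have norm at most `1`, so
`Pᵢⱼ Qᵢⱼ ≤ (Pᵢⱼ² + Qᵢⱼ²) / 2` is an entry of a doubly substochastic matrix `E`. For such `E` and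
nonincreasing nonnegative `a, b`, Abel summation in each index gives `∑ᵢⱼ Eᵢⱼ aᵢ bⱼ ≤ ∑ᵢ aᵢ bᵢ`.
-/

section Rearrangement

open Finset

theorem sum_mul_le_sum_mul_of_antitone {ι : Type*} [LinearOrder ι] (s : Finset ι) {a f g : ι → ℝ}
    (ha : Antitone a) (ha0 : ∀ i ∈ s, 0 ≤ a i)
    (hfg : ∀ k ∈ s, ∑ i ∈ s with i ≤ k, f i ≤ ∑ i ∈ s with i ≤ k, g i) :
    ∑ i ∈ s, a i * f i ≤ ∑ i ∈ s, a i * g i := by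
  classical
  induction s using Finset.induction_on_max generalizing a with
  | empty => simp
  | insert m s hlt ih =>
    have hm : m ∉ s := fun h => lt_irrefl m (hlt m h)
    -- split off the smallest weight `a m`; the weights `a i - a m` left on `s` stay antitone, `≥ 0`
    have peel : ∀ h : ι → ℝ, ∑ i ∈ insert m s, a i * h i
        = ∑ i ∈ s, (a i - a m) * h i + a m * ∑ i ∈ insert m s, h i := by
      intro h
      simp only [sum_insert hm, sub_mul, sum_sub_distrib, mul_add, mul_sum]
      ring
    have htotal : ∑ i ∈ insert m s, f i ≤ ∑ i ∈ insert m s, g i := by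
      have := hfg m (mem_insert_self m s)
      rwa [filter_true_of_mem fun i hi => ?_] at this
      rcases mem_insert.1 hi with rfl | hi
      exacts [le_rfl, (hlt i hi).le]
    rw [peel f, peel g]
    gcongr ?_ + ?_
    · refine ih (fun i j hij => sub_le_sub_right (ha hij) _)
        (fun i hi => sub_nonneg.2 (ha (hlt i hi).le)) fun k hk => ?_
      have := hfg k (mem_insert_of_mem hk)
      rwa [filter_insert, if_neg (not_le.2 (hlt k hk))] at this
    · exact mul_le_mul_of_nonneg_left htotal (ha0 m (mem_insert_self m s))

variable {ι : Type*} [Fintype ι]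

theorem sum_mul_le_sum_filter_le [LinearOrder ι] {b c : ι → ℝ} (hb : Antitone b)
    (hb0 : ∀ j, 0 ≤ b j) (hc0 : ∀ j, 0 ≤ c j) (hc1 : ∀ j, c j ≤ 1) {k : ι}
    (hc : ∑ j, c j ≤ #{j | j ≤ k}) :
    ∑ j, b j * c j ≤ ∑ j with j ≤ k, b j := by
  rw [sum_filter, ← sum_congr rfl fun j _ => mul_boole (j ≤ k) (b j)]
  refine sum_mul_le_sum_mul_of_antitone _ hb (fun j _ => hb0 j) fun l _ => ?_
  rcases le_total l k with hlk | hkl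
  · calc ∑ j with j ≤ l, c j ≤ ∑ j with j ≤ l, 1 := sum_le_sum fun j _ => hc1 j
      _ = ∑ j with j ≤ l, if j ≤ k then 1 else 0 :=
        sum_congr rfl fun j hj => (if_pos ((mem_filter.1 hj).2.trans hlk)).symm
  · calc ∑ j with j ≤ l, c j ≤ ∑ j, c j := sum_le_univ_sum_of_nonneg hc0
      _ ≤ #{j | j ≤ k} := hc
      _ = ∑ j with j ≤ l, if j ≤ k then 1 else 0 := by
        rw [sum_boole, filter_filter]
        congr 2
        ext j
        simp only [mem_filter, mem_univ, true_and]
        exact ⟨fun h => ⟨h.trans hkl, h⟩, And.right⟩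

structure IsDoublySubstochastic (E : Matrix ι ι ℝ) : Prop where
  nonneg : ∀ i j, 0 ≤ E i j
  sum_row_le_one : ∀ i, ∑ j, E i j ≤ 1
  sum_col_le_one : ∀ j, ∑ i, E i j ≤ 1

theorem IsDoublySubstochastic.half_add {E F : Matrix ι ι ℝ} (hE : IsDoublySubstochastic E)
    (hF : IsDoublySubstochastic F) :
    IsDoublySubstochastic (of fun i j => (E i j + F i j) / 2) where
  nonneg i j := div_nonneg (add_nonneg (hE.nonneg i j) (hF.nonneg i j)) zero_le_two
  sum_row_le_one i := by
    simp only [of_apply, ← sum_div, sum_add_distrib]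
    linarith [hE.sum_row_le_one i, hF.sum_row_le_one i]
  sum_col_le_one j := by
    simp only [of_apply, ← sum_div, sum_add_distrib]
    linarith [hE.sum_col_le_one j, hF.sum_col_le_one j]

theorem IsDoublySubstochastic.sum_mul_mul_le [LinearOrder ι] {E : Matrix ι ι ℝ}
    (hE : IsDoublySubstochastic E) {a b : ι → ℝ} (ha : Antitone a) (ha0 : ∀ i, 0 ≤ a i)
    (hb : Antitone b) (hb0 : ∀ j, 0 ≤ b j) :
    ∑ i, ∑ j, E i j * (a i * b j) ≤ ∑ i, a i * b i := by
  have hrow : ∀ i, ∑ j, E i j * (a i * b j) = a i * ∑ j, b j * E i j := fun i => by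
    rw [mul_sum]
    exact sum_congr rfl fun j _ => by ring
  simp only [hrow]
  refine sum_mul_le_sum_mul_of_antitone _ ha (fun i _ => ha0 i) fun k _ => ?_
  rw [sum_comm]
  simp only [← mul_sum]
  refine sum_mul_le_sum_filter_le hb hb0 (fun j => sum_nonneg fun i _ => hE.nonneg i j)
    (fun j => (sum_le_univ_sum_of_nonneg fun i => hE.nonneg i j).trans (hE.sum_col_le_one j)) ?_
  calc ∑ j, ∑ i with i ≤ k, E i j = ∑ i with i ≤ k, ∑ j, E i j := sum_comm
    _ ≤ ∑ i with i ≤ k, 1 := sum_le_sum fun i _ => hE.sum_row_le_one i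
    _ = #{i | i ≤ k} := by simp

end Rearrangement

section Bessel

open Finset

variable {p ι : Type*} [Fintype p] [Fintype ι] [DecidableEq ι]

theorem dotProduct_transpose_mulVec_le {W : Matrix p ι ℝ} {d : ι → ℝ} (hd : ∀ j, d j ≤ 1)
    (hW : Wᵀ * W = diagonal d) (v : p → ℝ) :
    (Wᵀ *ᵥ v) ⬝ᵥ (Wᵀ *ᵥ v) ≤ v ⬝ᵥ v := by
  set w := Wᵀ *ᵥ v
  have hw : w ⬝ᵥ w = v ⬝ᵥ (W *ᵥ w) := by
    rw [dotProduct_mulVec v W w, ← mulVec_transpose]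
  have hWw : (W *ᵥ w) ⬝ᵥ (W *ᵥ w) ≤ w ⬝ᵥ w := by
    have : (W *ᵥ w) ⬝ᵥ (W *ᵥ w) = w ⬝ᵥ (diagonal d *ᵥ w) := by
      rw [← hW, ← mulVec_mulVec, dotProduct_mulVec w Wᵀ, vecMul_transpose]
    rw [this]
    simp only [dotProduct, mulVec_diagonal]
    exact sum_le_sum fun j _ => by nlinarith [mul_self_nonneg (w j), hd j]
  have hcs : (v ⬝ᵥ W *ᵥ w) ^ 2 ≤ (v ⬝ᵥ v) * ((W *ᵥ w) ⬝ᵥ (W *ᵥ w)) := by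
    simpa only [dotProduct, sq] using sum_mul_sq_le_sq_mul_sq univ v (W *ᵥ w)
  have hv : 0 ≤ v ⬝ᵥ v := sum_nonneg fun i _ => mul_self_nonneg (v i)
  have hw0 : 0 ≤ w ⬝ᵥ w := sum_nonneg fun i _ => mul_self_nonneg (w i)
  rw [← hw] at hcs
  nlinarith [mul_le_mul_of_nonneg_left hWw hv]

theorem sum_sq_transpose_mul_apply_le_one {A B : Matrix p ι ℝ} {d d' : ι → ℝ}
    (hd : ∀ j, d j ≤ 1) (hA : Aᵀ * A = diagonal d) (hd' : ∀ j, d' j ≤ 1)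
    (hB : Bᵀ * B = diagonal d') (i : ι) :
    ∑ j, (Aᵀ * B) i j ^ 2 ≤ 1 := by
  set a : p → ℝ := fun r => A r i
  have hentry : ∀ j, (Aᵀ * B) i j = (Bᵀ *ᵥ a) j := fun j => by
    simp only [a, mul_apply, mulVec, dotProduct, transpose_apply, mul_comm]
  have ha : a ⬝ᵥ a = d i := by
    simpa [mul_apply, dotProduct] using congrFun (congrFun hA i) i
  calc ∑ j, (Aᵀ * B) i j ^ 2 = (Bᵀ *ᵥ a) ⬝ᵥ (Bᵀ *ᵥ a) := by simp only [hentry, dotProduct, sq]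
    _ ≤ a ⬝ᵥ a := dotProduct_transpose_mulVec_le hd' hB a
    _ ≤ 1 := ha ▸ hd i

theorem isDoublySubstochastic_sq_transpose_mul {A B : Matrix p ι ℝ} {d d' : ι → ℝ}
    (hd : ∀ j, d j ≤ 1) (hA : Aᵀ * A = diagonal d) (hd' : ∀ j, d' j ≤ 1)
    (hB : Bᵀ * B = diagonal d') :
    IsDoublySubstochastic (of fun i j => (Aᵀ * B) i j ^ 2) where
  nonneg i j := sq_nonneg _
  sum_row_le_one := sum_sq_transpose_mul_apply_le_one hd hA hd' hB
  sum_col_le_one j := by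
    simpa only [of_apply, ← transpose_apply (Aᵀ * B), transpose_mul, transpose_transpose]
      using sum_sq_transpose_mul_apply_le_one hd' hB hd hA j

end Bessel

section Decomposition

variable {p q ι : Type*} [Fintype p] [Fintype q] [Fintype ι] [DecidableEq ι]

theorem sum_sum_mul_eq_trace_transpose_mul (A B : Matrix p q ℝ) :
    ∑ i, ∑ j, A i j * B i j = trace (Aᵀ * B) := by
  simp only [trace, Matrix.diag, mul_apply, transpose_apply]
  exact Finset.sum_comm

theorem sum_sum_mul_eq_of_eq_mul_diagonal_mul_transpose {X Y : Matrix p q ℝ}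
    {U₁ U₂ : Matrix p ι ℝ} {V₁ V₂ : Matrix q ι ℝ} {a b : ι → ℝ}
    (hX : X = U₁ * diagonal a * V₁ᵀ) (hY : Y = U₂ * diagonal b * V₂ᵀ) :
    ∑ r, ∑ s, X r s * Y r s = ∑ i, ∑ j, (U₁ᵀ * U₂) i j * (V₁ᵀ * V₂) i j * (a i * b j) := by
  set M := diagonal a * (U₁ᵀ * U₂) * diagonal b
  have hXY : Xᵀ * Y = V₁ * M * V₂ᵀ := by
    simp only [M, hX, hY, transpose_mul, transpose_transpose, diagonal_transpose, Matrix.mul_assoc]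
  have hcycle : trace (V₁ * M * V₂ᵀ) = trace ((V₁ᵀ * V₂)ᵀ * M) := by
    rw [trace_mul_cycle, transpose_mul, transpose_transpose, trace_mul_comm]
  rw [sum_sum_mul_eq_trace_transpose_mul, hXY, hcycle, ← sum_sum_mul_eq_trace_transpose_mul]
  simp only [M, mul_diagonal, diagonal_mul]
  exact Finset.sum_congr rfl fun i _ => Finset.sum_congr rfl fun j _ => by ring

theorem exists_orthogonal_eq_mul_diagonal_eigenvalues {A : Matrix ι ι ℝ} (hA : A.IsHermitian) :
    ∃ V : Matrix ι ι ℝ, Vᵀ * V = 1 ∧ A = V * diagonal hA.eigenvalues * Vᵀ := by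
  refine ⟨hA.eigenvectorUnitary, ?_, ?_⟩
  · simpa [star_eq_conjTranspose] using hA.eigenvectorUnitary.2.1
  · simpa [star_eq_conjTranspose, Function.comp_def] using hA.spectral_theorem

theorem exists_orthogonal_eq_mul_diagonal_comp {A V : Matrix ι ι ℝ} {d : ι → ℝ}
    (hV : Vᵀ * V = 1) (hA : A = V * diagonal d * Vᵀ) (e : Equiv.Perm ι) :
    ∃ W : Matrix ι ι ℝ, Wᵀ * W = 1 ∧ A = W * diagonal (d ∘ e) * Wᵀ := by
  refine ⟨V.submatrix id e, ?_, ?_⟩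
  · rw [transpose_submatrix, ← submatrix_mul _ _ _ _ _ Function.bijective_id, hV,
      submatrix_one_equiv]
  · rw [← submatrix_diagonal_equiv, transpose_submatrix, submatrix_mul_equiv, submatrix_mul_equiv,
      submatrix_id_id, hA]

theorem exists_eq_mul_diagonal_of_transpose_mul_self {M : Matrix p ι ℝ} {s : ι → ℝ}
    (hM : Mᵀ * M = diagonal fun j => s j * s j) :
    ∃ (U : Matrix p ι ℝ) (d : ι → ℝ), (∀ j, d j ≤ 1) ∧ Uᵀ * U = diagonal d ∧
      M = U * diagonal s := by
  have hcol : ∀ i j, s j = 0 → M i j = 0 := fun i j hs => by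
    have hjj : ∑ r, M r j * M r j = 0 := by
      simpa [mul_apply, hs] using congrFun (congrFun hM j) j
    exact mul_self_eq_zero.1 <|
      (Finset.sum_eq_zero_iff_of_nonneg fun r _ => mul_self_nonneg (M r j)).1 hjj i
        (Finset.mem_univ i)
  -- `(s j)⁻¹ = 0` where `s j = 0`, so `U` has a zero column there
  refine ⟨M * diagonal s⁻¹, fun j => (s j)⁻¹ * (s j * s j * (s j)⁻¹), fun j => ?_, ?_, ?_⟩
  · by_cases hs : s j = 0 <;> simp [hs]
  · rw [transpose_mul, diagonal_transpose, Matrix.mul_assoc, ← Matrix.mul_assoc Mᵀ, hM,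
      diagonal_mul_diagonal, diagonal_mul_diagonal]
    rfl
  · ext i j
    rw [Matrix.mul_assoc, diagonal_mul_diagonal, mul_diagonal]
    by_cases hs : s j = 0 <;> simp [hs, hcol i j]

end Decomposition

namespace Paper

lemma isHermitian_transpose_mul_self {m n : ℕ} (X : Mat m n) : (Xᵀ * X).IsHermitian := by
  rw [Matrix.IsHermitian, Matrix.conjTranspose_eq_transpose_of_trivial,
    Matrix.transpose_mul, Matrix.transpose_transpose]

lemma eigs_antitone {k : ℕ} (A : Matrix (Fin k) (Fin k) ℝ) (hA : A.IsHermitian) :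
    Antitone (eigs A hA) := fun _ _ hij =>
  neg_le_neg_iff.1 (Tuple.monotone_sort (fun j => -(hA.eigenvalues j)) hij)

lemma svals_nonneg {m n : ℕ} (X : Mat m n) (i : Fin n) : 0 ≤ svals X i :=
  Real.sqrt_nonneg _

lemma svals_antitone {m n : ℕ} (X : Mat m n) : Antitone (svals X) :=
  fun _ _ hij => Real.sqrt_le_sqrt (eigs_antitone _ _ hij)

lemma svals_mul_self {m n : ℕ} (X : Mat m n) (i : Fin n) :
    svals X i * svals X i = eigs _ (isHermitian_transpose_mul_self X) i :=
  Real.mul_self_sqrt ((posSemidef_conjTranspose_mul_self X).eigenvalues_nonneg _)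

lemma exists_orthogonal_eq_mul_diagonal_eigs {k : ℕ} {A : Matrix (Fin k) (Fin k) ℝ}
    (hA : A.IsHermitian) :
    ∃ V : Matrix (Fin k) (Fin k) ℝ, Vᵀ * V = 1 ∧ A = V * diagonal (eigs A hA) * Vᵀ := by
  obtain ⟨V, hV, hAV⟩ := exists_orthogonal_eq_mul_diagonal_eigenvalues hA
  exact exists_orthogonal_eq_mul_diagonal_comp hV hAV _

lemma exists_svd {m n : ℕ} (X : Mat m n) :
    ∃ (U : Mat m n) (d : Fin n → ℝ) (V : Matrix (Fin n) (Fin n) ℝ), (∀ j, d j ≤ 1) ∧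
      Uᵀ * U = diagonal d ∧ Vᵀ * V = 1 ∧ X = U * diagonal (svals X) * Vᵀ := by
  obtain ⟨V, hV, hXX⟩ := exists_orthogonal_eq_mul_diagonal_eigs (isHermitian_transpose_mul_self X)
  have hM : (X * V)ᵀ * (X * V) = diagonal fun j => svals X j * svals X j := calc
    _ = Vᵀ * (Xᵀ * X) * V := by simp only [transpose_mul, Matrix.mul_assoc]
    _ = Vᵀ * V * diagonal (eigs _ (isHermitian_transpose_mul_self X)) * (Vᵀ * V) := by
      conv_lhs => rw [hXX]
      simp only [Matrix.mul_assoc]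
    _ = _ := by simp only [hV, Matrix.one_mul, Matrix.mul_one, svals_mul_self]
  obtain ⟨U, d, hd, hU, hXV⟩ := exists_eq_mul_diagonal_of_transpose_mul_self hM
  refine ⟨U, d, V, hd, hU, hV, ?_⟩
  rw [← hXV, Matrix.mul_assoc, mul_eq_one_comm.1 hV, Matrix.mul_one]

end Paper

theorem stmt0_general {m n : ℕ} (X Y : Mat m n) :
    finner X Y ≤ vinner (svals X) (svals Y) := by
  obtain ⟨U₁, d₁, V₁, hd₁, hU₁, hV₁, hX⟩ := exists_svd X
  obtain ⟨U₂, d₂, V₂, hd₂, hU₂, hV₂, hY⟩ := exists_svd Y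
  set P := U₁ᵀ * U₂
  set Q := V₁ᵀ * V₂
  have hE : IsDoublySubstochastic (of fun i j => (P i j ^ 2 + Q i j ^ 2) / 2) :=
    (isDoublySubstochastic_sq_transpose_mul hd₁ hU₁ hd₂ hU₂).half_add
      (isDoublySubstochastic_sq_transpose_mul (fun _ => le_rfl) (hV₁.trans diagonal_one.symm)
        (fun _ => le_rfl) (hV₂.trans diagonal_one.symm))
  calc finner X Y = ∑ i, ∑ j, P i j * Q i j * (svals X i * svals Y j) :=
        sum_sum_mul_eq_of_eq_mul_diagonal_mul_transpose hX hY
    _ ≤ ∑ i, ∑ j, (P i j ^ 2 + Q i j ^ 2) / 2 * (svals X i * svals Y j) := by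
        gcongr with i _ j _
        · exact mul_nonneg (svals_nonneg X i) (svals_nonneg Y j)
        · linarith [two_mul_le_add_sq (P i j) (Q i j)]
    _ ≤ vinner (svals X) (svals Y) :=
        hE.sum_mul_mul_le (svals_antitone X) (svals_nonneg X) (svals_antitone Y) (svals_nonneg Y)

/-- Von Neumann's trace inequality: `⟨X, Y⟩ ≤ ⟨σ(X), σ(Y)⟩`. -/
theorem stmt0 {m n : ℕ} (hmn : n ≤ m) (X Y : Mat m n) :
    finner X Y ≤ vinner (svals X) (svals Y) :=
  stmt0_general X Y
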